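/- With f as in the standard recurrence f_{0,k}=1, f_{j,k} = ((2k+1)/2) f_{j-1,k+1} + (2k+1/2) f_{j-1,k} + k f_{j-1,k-1}, and Ã^{(e)}_{j,k} = ∫_ℝ q^{2j} ψ_{2k}(q) dq, we have the closed form Ã^{(e)}_{j,k} = f_{j,k} · √2 · π^{1/4} · √((2k)!)/(2^k k!) for all j, k ≥ 0. -/

import Mathlib

open MeasureTheory Real

/-- Physicists' Hermite polynomials. -/
noncomputable def H : ℕ → ℝ → ℝ
  | 0 => fun _ => 1
  | 1 => fun q => 2 * q
  | (n + 2) => fun q => 2 * q * H (n + 1) q - 2 * (n + 1) * H n q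

/-- Normalized Hermite functions. -/
noncomputable def ψ (n : ℕ) (q : ℝ) : ℝ :=
  (Real.sqrt (2 ^ n * n.factorial * Real.sqrt Real.pi))⁻¹ * H n q * Real.exp (-q ^ 2 / 2)

/-- The two-index recurrence f_{j,k} (real valued). -/
noncomputable def f : ℕ → ℤ → ℝ
  | 0, _ => 1
  | (j + 1), k =>
      ((2 * (k : ℝ) + 1) / 2) * f j (k + 1) + (2 * (k : ℝ) + 1 / 2) * f j k + (k : ℝ) * f j (k - 1)

/-- Even moments of even Hermite functions. -/
noncomputable def Ae (j k : ℕ) : ℝ := ∫ q : ℝ, q ^ (2 * j) * ψ (2 * k) q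

/-!
Put `I(m, n) = ∫ q^m H_n(q) e^{-q²/2} dq`. The three-term recurrence `q H_n = H_{n+1}/2 + n H_{n-1}`
gives `I(m+1, n) = I(m, n+1)/2 + n I(m, n-1)`; applied twice with `m = 2j`, `n = 2k` it becomes the
recurrence defining `f` once `I(2j, 2k)` is divided by `I(0, 2k)`. The latter equals
`√(2π) (2k)!/k!` by the Gaussian integral and the integration by parts `I(1, n) = 2n I(0, n-1)`
(from `H_n' = 2n H_{n-1}`), and dividing by the normalisation of `ψ_{2k}` gives the constant.
-/

open Polynomial

theorem integrable_eval_mul_exp_neg_mul_sq {b : ℝ} (hb : 0 < b) (p : ℝ[X]) :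
    Integrable fun x : ℝ => p.eval x * exp (-b * x ^ 2) := by
  simp_rw [eval_eq_sum_range, Finset.sum_mul]
  refine integrable_finsetSum _ fun i _ => ?_
  simp_rw [mul_assoc]
  refine Integrable.const_mul ?_ _
  simpa [rpow_natCast] using
    integrable_rpow_mul_exp_neg_mul_sq hb (s := i) (neg_one_lt_zero.trans_le i.cast_nonneg)

theorem exists_polynomial_eq_H : ∀ n, ∃ p : ℝ[X], ∀ q, H n q = p.eval q
  | 0 => ⟨1, by simp [H]⟩
  | 1 => ⟨2 * X, by simp [H]⟩
  | n + 2 => by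
    obtain ⟨p₁, h₁⟩ := exists_polynomial_eq_H (n + 1)
    obtain ⟨p₀, h₀⟩ := exists_polynomial_eq_H n
    exact ⟨2 * X * p₁ - C (2 * (n + 1 : ℝ)) * p₀, fun q => by simp [H, h₁, h₀]⟩

theorem integrable_pow_mul_H_mul_gaussian (m n : ℕ) :
    Integrable fun q : ℝ => q ^ m * H n q * exp (-q ^ 2 / 2) := by
  obtain ⟨p, hp⟩ := exists_polynomial_eq_H n
  convert integrable_eval_mul_exp_neg_mul_sq (b := 1 / 2) (by norm_num) (X ^ m * p) using 2 with q
  simp only [hp, eval_mul, eval_pow, eval_X]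
  ring_nf

theorem mul_H (n : ℕ) (q : ℝ) : q * H n q = H (n + 1) q / 2 + n * H (n - 1) q := by
  rcases n with _ | n
  · simp [H]
  · simp [H]
    ring

theorem hasDerivAt_H : ∀ (n : ℕ) (q : ℝ), HasDerivAt (H n) (2 * n * H (n - 1) q) q
  | 0, q => by simpa [H] using hasDerivAt_const q (1 : ℝ)
  | 1, q => by simpa [H] using (hasDerivAt_id q).const_mul (2 : ℝ)
  | n + 2, q => by
    have hH : H (n + 2) = fun x => 2 * x * H (n + 1) x - 2 * (n + 1) * H n x := rfl
    rw [hH]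
    refine ((((hasDerivAt_id q).const_mul 2).mul (hasDerivAt_H (n + 1) q)).sub
      ((hasDerivAt_H n q).const_mul _)).congr_deriv ?_
    simp only [id, Nat.add_sub_cancel]
    push_cast
    linear_combination 4 * ((n : ℝ) + 1) * mul_H n q

noncomputable def hermiteMoment (m n : ℕ) : ℝ := ∫ q : ℝ, q ^ m * H n q * exp (-q ^ 2 / 2)

theorem hermiteMoment_succ (m n : ℕ) :
    hermiteMoment (m + 1) n = hermiteMoment m (n + 1) / 2 + n * hermiteMoment m (n - 1) := by
  have hsplit : ∀ q : ℝ, q ^ (m + 1) * H n q * exp (-q ^ 2 / 2) =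
      (1 / 2) * (q ^ m * H (n + 1) q * exp (-q ^ 2 / 2)) +
        n * (q ^ m * H (n - 1) q * exp (-q ^ 2 / 2)) := fun q => by
    linear_combination q ^ m * exp (-q ^ 2 / 2) * mul_H n q
  simp only [hermiteMoment, hsplit]
  rw [integral_add ((integrable_pow_mul_H_mul_gaussian m (n + 1)).const_mul _)
    ((integrable_pow_mul_H_mul_gaussian m (n - 1)).const_mul _), integral_const_mul,
    integral_const_mul]
  ring

theorem hermiteMoment_one (n : ℕ) : hermiteMoment 1 n = 2 * n * hermiteMoment 0 (n - 1) := by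
  have hderiv : ∀ q : ℝ, HasDerivAt (fun x => H n x * exp (-x ^ 2 / 2))
      (2 * n * (q ^ 0 * H (n - 1) q * exp (-q ^ 2 / 2)) - q ^ 1 * H n q * exp (-q ^ 2 / 2)) q :=
    fun q => by
      refine ((hasDerivAt_H n q).mul ((((hasDerivAt_pow 2 q).neg).div_const 2).exp)).congr_deriv ?_
      simp only [Pi.neg_apply]
      ring
  have hint := ((integrable_pow_mul_H_mul_gaussian 0 (n - 1)).const_mul (2 * n)).sub
    (integrable_pow_mul_H_mul_gaussian 1 n)
  have hzero := integral_eq_zero_of_hasDerivAt_of_integrable hderiv hint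
    (by simpa using integrable_pow_mul_H_mul_gaussian 0 n)
  rw [integral_sub ((integrable_pow_mul_H_mul_gaussian 0 (n - 1)).const_mul _)
    (integrable_pow_mul_H_mul_gaussian 1 n), integral_const_mul] at hzero
  simp only [hermiteMoment]
  linarith

theorem hermiteMoment_zero_zero : hermiteMoment 0 0 = √(2 * π) := by
  rw [show 2 * π = π / (1 / 2) by ring, ← integral_gaussian]
  simp only [hermiteMoment, H, pow_zero, one_mul]
  ring_nf

theorem hermiteMoment_zero_add_two (n : ℕ) :
    hermiteMoment 0 (n + 2) = 2 * (n + 1) * hermiteMoment 0 n := by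
  have h := hermiteMoment_succ 0 (n + 1)
  rw [hermiteMoment_one] at h
  push_cast at h
  linarith

theorem hermiteMoment_zero_two_mul (k : ℕ) :
    hermiteMoment 0 (2 * k) = √(2 * π) * (2 * k).factorial / k.factorial := by
  induction k with
  | zero => simp [hermiteMoment_zero_zero]
  | succ k ih =>
    rw [Nat.mul_succ, hermiteMoment_zero_add_two, ih, Nat.factorial_succ, Nat.factorial_succ,
      Nat.factorial_succ]
    push_cast
    field_simp
    ring

theorem hermiteMoment_add_two (m n : ℕ) :
    hermiteMoment (m + 2) n = hermiteMoment m (n + 2) / 4 + (n + 1 / 2) * hermiteMoment m n +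
      n * (n - 1) * hermiteMoment m (n - 2) := by
  rw [hermiteMoment_succ, hermiteMoment_succ m (n + 1)]
  rcases n with _ | n
  · norm_num
    ring
  · simp only [Nat.add_sub_cancel]
    rw [hermiteMoment_succ m n]
    simp only [Nat.cast_add, Nat.cast_one, add_sub_cancel_right, Nat.reduceSubDiff]
    ring

theorem hermiteMoment_two_mul_two_mul (j k : ℕ) :
    hermiteMoment (2 * j) (2 * k) = f j k * hermiteMoment 0 (2 * k) := by
  induction j generalizing k with
  | zero => simp [f]
  | succ j ih =>
    have hup : hermiteMoment (2 * j) (2 * k + 2) =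
        f j (k + 1) * (2 * (2 * k + 1) * hermiteMoment 0 (2 * k)) := by
      rw [show 2 * k + 2 = 2 * (k + 1) by ring, ih, mul_add_one, hermiteMoment_zero_add_two]
      push_cast
      ring
    have hdown : (2 * k : ℝ) * (2 * k - 1) * hermiteMoment (2 * j) (2 * k - 2) =
        k * f j (k - 1) * hermiteMoment 0 (2 * k) := by
      rcases k with _ | k
      · simp
      · rw [show 2 * (k + 1) - 2 = 2 * k by omega, ih, mul_add_one, hermiteMoment_zero_add_two]
        push_cast
        simp only [add_sub_cancel_right]
        ring
    rw [mul_add_one, hermiteMoment_add_two]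
    push_cast
    rw [hup, hdown, ih, f, Int.cast_natCast]
    ring

theorem integral_pow_mul_ψ (m n : ℕ) :
    ∫ q : ℝ, q ^ m * ψ n q = (√(2 ^ n * n.factorial * √π))⁻¹ * hermiteMoment m n := by
  rw [hermiteMoment, ← integral_const_mul]
  congr 1 with q
  rw [ψ]
  ring

theorem integral_ψ (n : ℕ) : ∫ q : ℝ, ψ n q = (√(2 ^ n * n.factorial * √π))⁻¹ * hermiteMoment 0 n := by
  simpa using integral_pow_mul_ψ 0 n

theorem integral_ψ_two_mul (k : ℕ) :
    ∫ q : ℝ, ψ (2 * k) q =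
      √2 * π ^ ((1 : ℝ) / 4) * √((2 * k).factorial) / (2 ^ k * k.factorial) := by
  have hsqrt_pi : √π = π ^ ((1 : ℝ) / 4) * π ^ ((1 : ℝ) / 4) := by
    rw [← rpow_add pi_pos, sqrt_eq_rpow]
    norm_num
  have hnorm : √(2 ^ (2 * k) * (2 * k).factorial * √π) =
      2 ^ k * √((2 * k).factorial) * π ^ ((1 : ℝ) / 4) := by
    rw [sqrt_mul (by positivity), sqrt_mul (by positivity), pow_mul', sqrt_sq (by positivity),
      hsqrt_pi, sqrt_mul_self (by positivity)]
  rw [integral_ψ, hnorm, hermiteMoment_zero_two_mul, sqrt_mul zero_le_two, hsqrt_pi]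
  have : 0 < √((2 * k).factorial) := sqrt_pos.2 (by positivity)
  field_simp
  rw [sq_sqrt (by positivity)]

theorem Ae_closed_form (j k : ℕ) :
    Ae j k =
      f j (k : ℤ) *
        (Real.sqrt 2 * Real.pi ^ ((1 : ℝ) / 4) * Real.sqrt ((2 * k).factorial) /
          (2 ^ k * k.factorial)) := by
  rw [← integral_ψ_two_mul, integral_ψ, Ae, integral_pow_mul_ψ, hermiteMoment_two_mul_two_mul]
  ring
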